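/- arXiv:2511.09916 — 6 statements merged into one kernel-verified Lean document; each statement's English description precedes it below -/
import Mathlib

section
/- Every nonzero tensor X ∈ ℝ^{I₁×I₂×⋯×I_N} (N ≥ 3) admits a generalized triple decomposition X = [A₁A₂⋯A_N] with common short dimension r equal to the second-largest of I₁,…,I_N; hence the generalized triple rank of X is at most submax{I₁,…,I_N}. -/
open scoped BigOperators

/-- The Multiple product of factor tensors `A n`, where `A n` has size `I n` in
mode `n` and size `r m` in every other mode `m ≠ n`. -/
noncomputable def mtpProd {N : ℕ} (I r : Fin N → ℕ)
    (A : ∀ n : Fin N, Fin (I n) → (∀ m : {m : Fin N // m ≠ n}, Fin (r m.1)) → ℝ)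
    (i : ∀ n : Fin N, Fin (I n)) : ℝ :=
  ∑ p : ∀ m : Fin N, Fin (r m), ∏ n : Fin N, A n (i n) (fun m => p m.1)

/-- `X` admits a Multiple decomposition with rank vector `r`. -/
def HasMtp {N : ℕ} (I r : Fin N → ℕ) (X : (∀ n : Fin N, Fin (I n)) → ℝ) : Prop :=
  ∃ A, ∀ i, X i = mtpProd I r A i

/-- The generalized triple rank: the smallest common short dimension `r`. -/
noncomputable def GTriRank {N : ℕ} (I : Fin N → ℕ) (X : (∀ n : Fin N, Fin (I n)) → ℝ) : ℕ :=
  sInf {r : ℕ | HasMtp I (fun _ => r) X}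

/-- The second-largest entry of `I`. -/
def submax {N : ℕ} (I : Fin N → ℕ) : ℕ :=
  Finset.univ.offDiag.sup fun nm : Fin N × Fin N => min (I nm.1) (I nm.2)

section Aux

variable {N : ℕ}

/-- Factor tensors realizing a decomposition of `X` with common short dimension `r`. -/
noncomputable def myA (I : Fin N → ℕ) (r : ℕ) (star : Fin N)
    (T : {m : Fin N // m ≠ star} ≃ {m : Fin N // m ≠ star})
    (hT : ∀ x, (T x).1 ≠ x.1) (hr : ∀ n, n ≠ star → I n ≤ r) (hr1 : 0 < r)
    (n₀ : {m : Fin N // m ≠ star}) (X : (∀ n : Fin N, Fin (I n)) → ℝ)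
    (n : Fin N) (i : Fin (I n)) (p : ∀ m : {m : Fin N // m ≠ n}, Fin r) : ℝ :=
  if hn : n = star then
    (if h : ∀ m : {m : Fin N // m ≠ star},
        (p ⟨(T m).1, fun he => (T m).2 (he.trans hn)⟩).val < I m.1 then
      X (fun k => if hk : k = star then Fin.cast (congrArg I (hn.trans hk.symm)) i
        else ⟨(p ⟨(T ⟨k, hk⟩).1, fun he => (T ⟨k, hk⟩).2 (he.trans hn)⟩).val, h ⟨k, hk⟩⟩)
    else 0)
  else
    (if p ⟨(T ⟨n, hn⟩).1, hT ⟨n, hn⟩⟩ = Fin.castLE (hr n hn) i then 1 else 0) *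
    (if n = n₀.1 then (if p ⟨star, Ne.symm hn⟩ = ⟨0, hr1⟩ then 1 else 0) else 1)

theorem myA_spec (I : Fin N → ℕ) (r : ℕ) (star : Fin N)
    (T : {m : Fin N // m ≠ star} ≃ {m : Fin N // m ≠ star})
    (hT : ∀ x, (T x).1 ≠ x.1) (hr : ∀ n, n ≠ star → I n ≤ r) (hr1 : 0 < r)
    (n₀ : {m : Fin N // m ≠ star}) (X : (∀ n : Fin N, Fin (I n)) → ℝ)
    (i : ∀ n : Fin N, Fin (I n)) :
    X i = mtpProd I (fun _ => r) (myA I r star T hT hr hr1 n₀ X) i := by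
  classical
  set p₀ : ∀ m : Fin N, Fin r := fun m =>
    if hm : m = star then ⟨0, hr1⟩
    else ⟨(i (T.symm ⟨m, hm⟩).1).val,
      lt_of_lt_of_le (i _).isLt (hr _ (T.symm ⟨m, hm⟩).2)⟩ with hp₀
  have hp₀ne : ∀ (m : Fin N) (hm : m ≠ star),
      p₀ m = ⟨(i (T.symm ⟨m, hm⟩).1).val,
        lt_of_lt_of_le (i _).isLt (hr _ (T.symm ⟨m, hm⟩).2)⟩ := by
    intro m hm; simp [hp₀, hm]
  have hp₀s : p₀ star = ⟨0, hr1⟩ := by simp [hp₀]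
  have hTval : ∀ x : {m : Fin N // m ≠ star}, T.symm ⟨(T x).1, (T x).2⟩ = x := by
    intro x; exact T.symm_apply_apply x
  have hieq : ∀ (m' : Fin N) (hm' : m' ≠ star) (x : {m : Fin N // m ≠ star}),
      T.symm ⟨m', hm'⟩ = x → (i (T.symm ⟨m', hm'⟩).1).val = (i x.1).val := by
    intro m' hm' x h; rw [h]
  have hp₀T : ∀ (x : {m : Fin N // m ≠ star}), (p₀ (T x).1).val = (i x.1).val := by
    intro x
    rw [hp₀ne _ (T x).2]
    exact hieq _ _ x (hTval x)
  have hcond : ∀ m : {m : Fin N // m ≠ star}, (p₀ (T m).1).val < I m.1 := by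
    intro m
    rw [hp₀T m]
    exact (i m.1).isLt
  rw [mtpProd, Finset.sum_eq_single p₀]
  · rw [Finset.prod_eq_single star]
    · rw [myA, dif_pos rfl, dif_pos hcond]
      congr 1
      funext k
      by_cases hk : k = star
      · subst hk
        rw [dif_pos rfl]
        exact Fin.ext rfl
      · rw [dif_neg hk]
        exact Fin.ext (hp₀T ⟨k, hk⟩).symm
    · intro n _ hn
      rw [myA, dif_neg hn]
      have h1 : p₀ (T ⟨n, hn⟩).1 = Fin.castLE (hr n hn) (i n) :=
        Fin.ext (hp₀T ⟨n, hn⟩)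
      rw [if_pos h1]
      by_cases h2 : n = n₀.1
      · rw [if_pos h2, if_pos hp₀s, mul_one]
      · rw [if_neg h2, mul_one]
    · intro h
      exact absurd (Finset.mem_univ star) h
  · intro p _ hne
    have : ∃ m, p m ≠ p₀ m := by
      by_contra h
      push_neg at h
      exact hne (funext h)
    obtain ⟨m, hm⟩ := this
    by_cases hms : m = star
    · refine Finset.prod_eq_zero (Finset.mem_univ n₀.1) ?_
      rw [hms] at hm
      have hm' : ¬ (p star = (⟨0, hr1⟩ : Fin r)) := by
        rw [hp₀s] at hm; exact hm
      rw [myA, dif_neg n₀.2, if_pos rfl, if_neg hm', mul_zero]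
    · set x := T.symm ⟨m, hms⟩ with hx
      have hTx : T x = ⟨m, hms⟩ := T.apply_symm_apply _
      have h2 : (T ⟨x.1, x.2⟩).1 = m := congrArg Subtype.val hTx
      have hc : ¬ (p (T ⟨x.1, x.2⟩).1 = Fin.castLE (hr x.1 x.2) (i x.1)) := by
        intro hc
        apply hm
        rw [h2] at hc
        rw [hc, hp₀ne m hms]
        exact Fin.ext rfl
      refine Finset.prod_eq_zero (Finset.mem_univ x.1) ?_
      rw [myA, dif_neg x.2, if_neg hc, zero_mul]
  · intro h
    exact absurd (Finset.mem_univ p₀) h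

end Aux

theorem stmt0 {N : ℕ} (hN : 3 ≤ N) (I : Fin N → ℕ)
    (X : (∀ n : Fin N, Fin (I n)) → ℝ) (hX : X ≠ 0) :
    HasMtp I (fun _ => submax I) X ∧ GTriRank I X ≤ submax I := by
  classical
  have hpos : ∀ n, 0 < I n := by
    intro n
    by_contra h
    exact hX (funext fun i => absurd (i n).isLt (by omega))
  have hne : Nonempty (Fin N) := ⟨⟨0, by omega⟩⟩
  obtain ⟨star, -, hstar⟩ := Finset.exists_max_image Finset.univ I Finset.univ_nonempty
  have hsup : ∀ n, n ≠ star → min (I n) (I star) ≤ submax I := by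
    intro n hn
    exact Finset.le_sup (f := fun nm : Fin N × Fin N => min (I nm.1) (I nm.2))
      (b := (n, star)) (Finset.mem_offDiag.mpr ⟨Finset.mem_univ _, Finset.mem_univ _, hn⟩)
  have hr : ∀ n, n ≠ star → I n ≤ submax I := by
    intro n hn
    have := hsup n hn
    rwa [min_eq_left (hstar n (Finset.mem_univ n))] at this
  obtain ⟨m₀, hm₀⟩ : ∃ n : Fin N, n ≠ star := by
    by_cases h : (⟨0, by omega⟩ : Fin N) = star
    · refine ⟨⟨1, by omega⟩, ?_⟩
      rw [← h]
      intro hc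
      exact absurd (congrArg Fin.val hc) (by simp)
    · exact ⟨_, h⟩
  have hr1 : 0 < submax I :=
    lt_of_lt_of_le (lt_min (hpos m₀) (hpos star)) (hsup m₀ hm₀)
  obtain ⟨k, rfl⟩ : ∃ k, N = k + 3 := ⟨N - 3, by omega⟩
  have hcard : Fintype.card {m : Fin (k + 3) // m ≠ star} = k + 2 := by
    have : Fintype.card {m : Fin (k + 3) // m = star} = 1 := Fintype.card_subtype_eq star
    have h2 := Fintype.card_subtype_compl (fun m : Fin (k + 3) => m = star)
    rw [this, Fintype.card_fin] at h2
    exact h2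
  set e := Fintype.equivFinOfCardEq hcard with he
  set T : {m : Fin (k + 3) // m ≠ star} ≃ {m : Fin (k + 3) // m ≠ star} :=
    e.trans ((finRotate (k + 2)).trans e.symm) with hTdef
  have hT : ∀ x, (T x).1 ≠ x.1 := by
    intro x hc
    have hx : T x = x := Subtype.ext hc
    have : finRotate (k + 2) (e x) = e x := by
      have := congrArg e hx
      simp only [hTdef, Equiv.trans_apply, Equiv.apply_symm_apply] at this; exact this
    rw [finRotate_succ_apply] at this
    have h10 : (1 : Fin (k + 2)) = 0 := by
      have := add_left_cancel (a := e x) (b := (1 : Fin (k+2))) (c := 0) (by simpa using this)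
      exact this
    exact absurd (congrArg Fin.val h10) (by simp)
  have hmtp : HasMtp I (fun _ => submax I) X :=
    ⟨myA I (submax I) star T hT hr hr1 ⟨m₀, hm₀⟩ X,
     fun i => myA_spec I (submax I) star T hT hr hr1 ⟨m₀, hm₀⟩ X i⟩
  exact ⟨hmtp, Nat.sInf_le hmtp⟩
end

section
/- If X = [A₁A₂⋯A_N] is a Multiple product, then the mode-1 unfolding satisfies X_{(1)} = (A₁)_{(1)} E^⊤, where E is the matrix of size (I₂⋯I_N) × (r₂⋯r_N) with entries E_{(i₂…i_N),(p₂…p_N)} = Σ_{p₁=1}^{r₁} (A₂)_{p₁i₂p₃…p_N}(A₃)_{p₁p₂i₃…p_N}⋯(A_N)_{p₁p₂…p_{N-1}i_N}. -/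
open scoped BigOperators

/-- Merge a mode-`n` index with a multi-index over the remaining modes. -/
def mergeIdx {N : ℕ} (I : Fin N → ℕ) (n : Fin N) (i : Fin (I n))
    (j : ∀ m : {m : Fin N // m ≠ n}, Fin (I m.1)) : ∀ m : Fin N, Fin (I m) :=
  fun m => if h : m = n then Fin.cast (congrArg I h).symm i else j ⟨m, h⟩

/-- The matrix `E` with entries
`E_{(i₂…i_N),(p₂…p_N)} = ∑_{p₁} (A₂)_{p₁i₂p₃…p_N} ⋯ (A_N)_{p₁p₂…p_{N-1}i_N}`. -/
noncomputable def unfoldE {N : ℕ} [NeZero N] (I r : Fin N → ℕ)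
    (A : ∀ n : Fin N, Fin (I n) → (∀ m : {m : Fin N // m ≠ n}, Fin (r m.1)) → ℝ)
    (j : ∀ m : {m : Fin N // m ≠ (0 : Fin N)}, Fin (I m.1))
    (q : ∀ m : {m : Fin N // m ≠ (0 : Fin N)}, Fin (r m.1)) : ℝ :=
  ∑ p0 : Fin (r 0), ∏ n : {n : Fin N // n ≠ (0 : Fin N)},
    A n.1 (j n)
      (fun m => if h : m.1 = (0 : Fin N) then Fin.cast (congrArg r h).symm p0
        else q ⟨m.1, h⟩)

/-- Mode-1 unfolding formula `X_{(1)} = (A₁)_{(1)} Eᵀ` entrywise. -/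
theorem stmt5 {N : ℕ} [NeZero N] (I r : Fin N → ℕ)
    (A : ∀ n : Fin N, Fin (I n) → (∀ m : {m : Fin N // m ≠ n}, Fin (r m.1)) → ℝ)
    (i0 : Fin (I 0)) (j : ∀ m : {m : Fin N // m ≠ (0 : Fin N)}, Fin (I m.1)) :
    mtpProd I r A (mergeIdx I 0 i0 j) =
      ∑ q : ∀ m : {m : Fin N // m ≠ (0 : Fin N)}, Fin (r m.1),
        A 0 i0 q * unfoldE I r A j q := by
  classical
  unfold mtpProd unfoldE
  rw [← Equiv.sum_comp (Equiv.piSplitAt (0 : Fin N) (fun m => Fin (r m))).symm]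
  rw [Fintype.sum_prod_type, Finset.sum_comm]
  refine Finset.sum_congr rfl fun q _ => ?_
  rw [Finset.mul_sum]
  refine Finset.sum_congr rfl fun p0 _ => ?_
  rw [← Finset.mul_prod_erase Finset.univ _ (Finset.mem_univ (0 : Fin N))]
  have hsub : ∀ x : Fin N, x ∈ Finset.univ.erase (0 : Fin N) ↔ x ≠ 0 := by simp
  rw [Finset.prod_subtype _ hsub (fun x => A x (mergeIdx I 0 i0 j x) fun m => (Equiv.piSplitAt 0 fun m => Fin (r m)).symm (p0, q) m.1)]
  congr 1
  · have h2 : (fun m : {m : Fin N // m ≠ (0 : Fin N)} =>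
        (Equiv.piSplitAt (0 : Fin N) (fun m => Fin (r m))).symm (p0, q) m.1) = q := by
      funext m
      simp only [Equiv.piSplitAt, Equiv.coe_fn_symm_mk]
      rw [dif_neg m.2]
    rw [show mergeIdx I 0 i0 j 0 = i0 from rfl, h2]
  · refine Finset.prod_congr rfl fun n _ => ?_
    congr 1
    · simp [mergeIdx, dif_neg n.2]
    · funext m
      simp only [Equiv.piSplitAt, Equiv.coe_fn_symm_mk]
      obtain ⟨m, hm⟩ := m
      by_cases h : m = (0 : Fin N)
      · subst h; rfl
      · rw [dif_neg h, dif_neg h]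
end

section
/- For any tensor X, the generalized triple rank of X is at most the CP rank of X: any CP decomposition with r rank-one terms yields a generalized triple decomposition with parameter r by placing the factor matrices along the super-diagonal of the factor tensors. -/
open scoped BigOperators

/-- `X` admits a CP decomposition with `p` rank-one terms. -/
def HasCP {N : ℕ} (I : Fin N → ℕ) (p : ℕ) (X : (∀ n : Fin N, Fin (I n)) → ℝ) : Prop :=
  ∃ A : ∀ n : Fin N, Fin (I n) → Fin p → ℝ,
    ∀ i, X i = ∑ k : Fin p, ∏ n : Fin N, A n (i n) k

/-- The CP rank of `X`. -/
noncomputable def CPRank {N : ℕ} (I : Fin N → ℕ)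
    (X : (∀ n : Fin N, Fin (I n)) → ℝ) : ℕ :=
  sInf {p : ℕ | HasCP I p X}

lemma cp_to_mtp {N : ℕ} (hN : 3 ≤ N) (I : Fin N → ℕ)
    (X : (∀ n : Fin N, Fin (I n)) → ℝ) (p : ℕ) (h : HasCP I p X) :
    HasMtp I (fun _ => p) X := by
  classical
  obtain ⟨A, hA⟩ := h
  have hN1 : 0 < N := by omega
  have hne : Nonempty (Fin N) := ⟨⟨0, hN1⟩⟩
  have hnt : Nontrivial (Fin N) := Fin.nontrivial_iff_two_le.mpr (by omega)
  refine ⟨fun n j q => if h : ∃ k : Fin p, ∀ m, q m = k then A n j h.choose else 0, ?_⟩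
  intro i
  rw [hA]
  unfold mtpProd
  have key : ∀ q : Fin N → Fin p,
      (∏ n : Fin N, (if h : ∃ k : Fin p, ∀ m : {m : Fin N // m ≠ n}, q m.1 = k
        then A n (i n) h.choose else 0))
      = ∑ k : Fin p, if q = (fun _ => k) then ∏ n, A n (i n) k else 0 := by
    intro q
    by_cases hq : ∃ k : Fin p, ∀ m, q m = k
    · obtain ⟨k₀, hk₀⟩ := hq
      have hq' : q = fun _ => k₀ := funext hk₀
      have hsum : (∑ k : Fin p, if q = (fun _ => k) then ∏ n, A n (i n) k else 0)
          = ∏ n, A n (i n) k₀ := by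
        rw [Finset.sum_eq_single k₀]
        · rw [if_pos hq']
        · intro k _ hk
          rw [if_neg]
          intro h
          exact hk (congrFun (hq'.symm.trans h) ⟨0, hN1⟩).symm
        · intro h; exact absurd (Finset.mem_univ k₀) h
      rw [hsum]
      refine Finset.prod_congr rfl fun n _ => ?_
      have hex : ∃ k : Fin p, ∀ m : {m : Fin N // m ≠ n}, q m.1 = k :=
        ⟨k₀, fun m => hk₀ m.1⟩
      rw [dif_pos hex]
      obtain ⟨m, hm⟩ := exists_ne n
      have h1 : q m = hex.choose := hex.choose_spec ⟨m, hm⟩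
      have h2 : q m = k₀ := hk₀ m
      rw [← h1, h2]
    · have h0 : (∑ k : Fin p, if q = (fun _ => k) then ∏ n, A n (i n) k else 0) = 0 := by
        apply Finset.sum_eq_zero
        intro k _
        rw [if_neg]
        intro hqk
        exact hq ⟨k, fun m => congrFun hqk m⟩
      rw [h0]
      -- q is non-constant: find m₁ m₂ with q m₁ ≠ q m₂
      obtain ⟨m₁⟩ := hne
      push_neg at hq
      obtain ⟨m₂, hm₂⟩ := hq (q m₁)
      -- find n different from both m₁ and m₂
      have hcompl : (({m₁, m₂} : Finset (Fin N))ᶜ).Nonempty := by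
        rw [← Finset.card_pos, Finset.card_compl]
        have h2 : ({m₁, m₂} : Finset (Fin N)).card ≤ 2 :=
          (Finset.card_insert_le _ _).trans (by simp)
        have hu : Fintype.card (Fin N) = N := Fintype.card_fin N
        omega
      obtain ⟨n, hn⟩ := hcompl
      simp only [Finset.mem_compl, Finset.mem_insert, Finset.mem_singleton, not_or] at hn
      apply Finset.prod_eq_zero (Finset.mem_univ n)
      rw [dif_neg]
      rintro ⟨k, hk⟩
      exact hm₂ (((hk ⟨m₂, fun h => hn.2 h.symm⟩).trans
        (hk ⟨m₁, fun h => hn.1 h.symm⟩).symm))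
  calc (∑ k : Fin p, ∏ n : Fin N, A n (i n) k)
      = ∑ k : Fin p, ∑ q : Fin N → Fin p,
          (if q = (fun _ => k) then ∏ n, A n (i n) k else 0) := by
        refine Finset.sum_congr rfl fun k _ => ?_
        rw [Finset.sum_ite_eq' Finset.univ (fun _ => k) (fun _ => ∏ n, A n (i n) k)]
        simp
    _ = ∑ q : Fin N → Fin p, ∑ k : Fin p,
          (if q = (fun _ => k) then ∏ n, A n (i n) k else 0) := Finset.sum_comm
    _ = ∑ q : ∀ _ : Fin N, Fin p, ∏ n : Fin N,
          (if h : ∃ k : Fin p, ∀ m : {m : Fin N // m ≠ n}, q m.1 = k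
            then A n (i n) h.choose else 0) := by
        exact Finset.sum_congr rfl fun q _ => (key q).symm

lemma hasCP_exists {N : ℕ} (hN : 3 ≤ N) (I : Fin N → ℕ)
    (X : (∀ n : Fin N, Fin (I n)) → ℝ) : ∃ p, HasCP I p X := by
  classical
  have hN1 : 0 < N := by omega
  set n₀ : Fin N := ⟨0, hN1⟩
  set e := Fintype.equivFin (∀ n : Fin N, Fin (I n)) with he
  refine ⟨Fintype.card (∀ n : Fin N, Fin (I n)),
    fun n j k => (if e.symm k n = j then 1 else 0) *
      (if n = n₀ then X (e.symm k) else 1), fun i => ?_⟩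
  rw [Finset.sum_eq_single (e i)]
  · simp [Finset.prod_ite_eq']
  · intro k _ hk
    have : e.symm k ≠ i := fun h => hk (by rw [← h, Equiv.apply_symm_apply])
    obtain ⟨n, hn⟩ := Function.ne_iff.mp this
    exact Finset.prod_eq_zero (Finset.mem_univ n) (by simp [hn])
  · intro h
    exact absurd (Finset.mem_univ (e i)) h

theorem stmt6 {N : ℕ} (hN : 3 ≤ N) (I : Fin N → ℕ)
    (X : (∀ n : Fin N, Fin (I n)) → ℝ) :
    (∀ p : ℕ, HasCP I p X → HasMtp I (fun _ => p) X) ∧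
      GTriRank I X ≤ CPRank I X := by
  refine ⟨fun p => cp_to_mtp hN I X p, ?_⟩
  have hne : {p : ℕ | HasCP I p X}.Nonempty := hasCP_exists hN I X
  have hmem : HasCP I (CPRank I X) X := Nat.sInf_mem hne
  exact Nat.sInf_le (cp_to_mtp hN I X _ hmem)
end

section
/- Let X = D ×₁ U₁ ×₂ U₂ ⋯ ×_N U_N be a Tucker decomposition with each Gram matrix U_iᵀU_i invertible. Then D = X ×₁ (U₁ᵀU₁)⁻¹U₁ᵀ ×₂ (U₂ᵀU₂)⁻¹U₂ᵀ ⋯ ×_N (U_NᵀU_N)⁻¹U_Nᵀ; consequently a rank vector (r₁,…,r_N) admits a Multiple decomposition of X if and only if it admits one of D, so MtpRank(X) = MtpRank(D). -/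
open scoped BigOperators
open Matrix

/-- `r` is the Multiple rank of `X`: each `r n` is at most the generalized triple
rank, `r` admits a Multiple decomposition of `X`, and among all such rank vectors
`r` has minimal `ℓ₁` norm, with ties broken by lexicographic order. -/
def IsMtpRank {N : ℕ} (I : Fin N → ℕ) (X : (∀ n : Fin N, Fin (I n)) → ℝ)
    (r : Fin N → ℕ) : Prop :=
  (∀ n, r n ≤ GTriRank I X) ∧ HasMtp I r X ∧
    ∀ s : Fin N → ℕ, ((∀ n, s n ≤ GTriRank I X) ∧ HasMtp I s X) →
      (∑ n, r n < ∑ n, s n ∨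
        (∑ n, r n = ∑ n, s n ∧
          (r = s ∨ ∃ n, r n < s n ∧ ∀ m, m < n → r m = s m)))

open scoped BigOperators
open Matrix

lemma recover {N : ℕ} (I t : Fin N → ℕ)
    (M : ∀ n, Matrix (Fin (I n)) (Fin (t n)) ℝ)
    (V : ∀ n, Matrix (Fin (t n)) (Fin (I n)) ℝ)
    (hV : ∀ n, V n * M n = 1)
    (Z : (∀ n : Fin N, Fin (t n)) → ℝ)
    (Y : (∀ n : Fin N, Fin (I n)) → ℝ)
    (hY : ∀ i, Y i = ∑ p : ∀ n : Fin N, Fin (t n), Z p * ∏ n, M n (i n) (p n))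
    (p : ∀ n : Fin N, Fin (t n)) :
    Z p = ∑ i : ∀ n : Fin N, Fin (I n), (∏ n, V n (p n) (i n)) * Y i := by
  calc Z p = ∑ q : ∀ n : Fin N, Fin (t n), Z q * ∏ n, (V n * M n) (p n) (q n) := by
        simp only [hV, Matrix.one_apply]
        rw [Finset.sum_eq_single p]
        · simp
        · intro q _ hq
          have : ∃ n, p n ≠ q n := by
            by_contra h
            push_neg at h
            exact hq (funext fun n => (h n).symm)
          obtain ⟨n, hn⟩ := this
          rw [Finset.prod_eq_zero (Finset.mem_univ n) (by simp [hn])]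
          ring
        · simp
    _ = ∑ q : ∀ n : Fin N, Fin (t n), Z q *
          ∏ n, ∑ j : Fin (I n), V n (p n) j * M n j (q n) := by
        simp [Matrix.mul_apply]
    _ = ∑ q : ∀ n : Fin N, Fin (t n), Z q *
          ∑ i ∈ Fintype.piFinset (fun n => (Finset.univ : Finset (Fin (I n)))),
            ∏ n, V n (p n) (i n) * M n (i n) (q n) := by
        simp only [Finset.prod_univ_sum]
    _ = ∑ i : ∀ n : Fin N, Fin (I n), (∏ n, V n (p n) (i n)) * Y i := by
        simp only [Fintype.piFinset_univ, Finset.mul_sum, hY, Finset.mul_sum]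
        rw [Finset.sum_comm]
        refine Finset.sum_congr rfl fun i _ => Finset.sum_congr rfl fun q _ => ?_
        rw [Finset.prod_mul_distrib]
        ring

lemma transport {N : ℕ} (I t : Fin N → ℕ)
    (M : ∀ n, Matrix (Fin (I n)) (Fin (t n)) ℝ)
    (Z : (∀ n : Fin N, Fin (t n)) → ℝ)
    (Y : (∀ n : Fin N, Fin (I n)) → ℝ)
    (hY : ∀ i, Y i = ∑ p : ∀ n : Fin N, Fin (t n), Z p * ∏ n, M n (i n) (p n))
    (rv : Fin N → ℕ) : HasMtp t rv Z → HasMtp I rv Y := by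
  rintro ⟨A, hA⟩
  refine ⟨fun n x f => ∑ j : Fin (t n), M n x j * A n j f, fun i => ?_⟩
  rw [hY]
  unfold mtpProd
  simp only [Finset.prod_univ_sum, Fintype.piFinset_univ]
  rw [Finset.sum_comm]
  refine Finset.sum_congr rfl fun q _ => ?_
  rw [hA q]
  unfold mtpProd
  rw [Finset.sum_mul]
  refine Finset.sum_congr rfl fun p _ => ?_
  rw [Finset.prod_mul_distrib]
  ring
theorem stmt10 {N : ℕ} (hN : 3 ≤ N) (I t : Fin N → ℕ)
    (D : (∀ n : Fin N, Fin (t n)) → ℝ)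
    (U : ∀ n : Fin N, Matrix (Fin (I n)) (Fin (t n)) ℝ)
    (X : (∀ n : Fin N, Fin (I n)) → ℝ)
    (hX : ∀ i, X i = ∑ p : ∀ n : Fin N, Fin (t n), D p * ∏ n : Fin N, U n (i n) (p n))
    (hGram : ∀ n, IsUnit ((U n)ᵀ * U n)) :
    (∀ p : (∀ n : Fin N, Fin (t n)),
        D p = ∑ i : ∀ n : Fin N, Fin (I n),
          (∏ n : Fin N, (((U n)ᵀ * U n)⁻¹ * (U n)ᵀ) (p n) (i n)) * X i) ∧
      (∀ rv : Fin N → ℕ, HasMtp I rv X ↔ HasMtp t rv D) ∧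
      (∀ rv : Fin N → ℕ, IsMtpRank I X rv ↔ IsMtpRank t D rv) := by
  set V : ∀ n, Matrix (Fin (t n)) (Fin (I n)) ℝ :=
    fun n => ((U n)ᵀ * U n)⁻¹ * (U n)ᵀ with hVdef
  have hVU : ∀ n, V n * U n = 1 := by
    intro n
    rw [hVdef]
    dsimp only
    rw [Matrix.mul_assoc]
    exact Matrix.nonsing_inv_mul _ ((Matrix.isUnit_iff_isUnit_det _).mp (hGram n))
  have part1 : ∀ p : (∀ n : Fin N, Fin (t n)),
      D p = ∑ i : ∀ n : Fin N, Fin (I n), (∏ n, V n (p n) (i n)) * X i :=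
    recover I t U V hVU D X hX
  have hD : ∀ p, D p = ∑ i : ∀ n : Fin N, Fin (I n), X i * ∏ n, V n (p n) (i n) := by
    intro p
    rw [part1 p]
    exact Finset.sum_congr rfl fun i _ => mul_comm _ _
  have part2 : ∀ rv : Fin N → ℕ, HasMtp I rv X ↔ HasMtp t rv D := fun rv =>
    ⟨transport t I V X D hD rv, transport I t U D X hX rv⟩
  have hG : GTriRank I X = GTriRank t D := by
    unfold GTriRank
    congr 1
    ext r
    exact part2 (fun _ => r)
  exact ⟨part1, part2, fun rv => by simp only [IsMtpRank, hG, part2]⟩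
end

section
/- Let A_{Θ₁},…,A_{Θ_N} be depth-d MLPs with shared σ (Lipschitz constant κ, σ(0)=0) and all weight matrices bounded by ω in ℓ₁ norm, mapping scalars to tensor slices, and define f(x₁,…,x_N) := [A_{Θ₁}(x₁)⋯A_{Θ_N}(x_N)] via the Multiple product, on a bounded domain with ‖x‖_∞ ≤ ζ. Then f is Lipschitz: |f(x) − f(y)| ≤ √N · ω^{Nd} κ^{Nd−N} ζ^{N−1} ‖x − y‖ for all x, y in the domain. -/
open scoped BigOperators

/-- A depth-`k` multilayer perceptron applied to the scalar input `x`: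
`mlp σ dims H x d = H_{d-1} σ(H_{d-2} ⋯ σ(H₀ x))` (no activation on the input
or on the final output). `dims k` is the width of layer `k` and
`H k : ℝ^{dims (k+1) × dims k}` is the `k`-th weight matrix. -/
noncomputable def mlp (σ : ℝ → ℝ) (dims : ℕ → ℕ)
    (H : ∀ k : ℕ, Fin (dims (k + 1)) → Fin (dims k) → ℝ) (x : ℝ) :
    (k : ℕ) → Fin (dims k) → ℝ
  | 0 => fun _ => x
  | k + 1 => fun j => ∑ t, H k j t *
      (if k = 0 then mlp σ dims H x k t else σ (mlp σ dims H x k t))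

/-- The IMTD tensor function `f(x₁,…,x_N) = [A_{Θ₁}(x₁)⋯A_{Θ_N}(x_N)]`, where
`A_{Θ_n}(x_n)` is the reshape (via the bijection `e n`) of the output of the
`n`-th MLP, a factor tensor indexed by `(p_m)_{m ≠ n}`. -/
noncomputable def imtdFun {N : ℕ} (r : Fin N → ℕ) (σ : ℝ → ℝ) (d : ℕ)
    (dims : Fin N → ℕ → ℕ)
    (H : ∀ n : Fin N, ∀ k : ℕ, Fin (dims n (k + 1)) → Fin (dims n k) → ℝ)
    (e : ∀ n : Fin N, (∀ m : {m : Fin N // m ≠ n}, Fin (r m.1)) ≃ Fin (dims n d))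
    (x : Fin N → ℝ) : ℝ :=
  ∑ p : ∀ m : Fin N, Fin (r m), ∏ n : Fin N,
    mlp σ (dims n) (H n) (x n) d (e n (fun m => p m.1))


open Finset in
private lemma mlp_zero (σ : ℝ → ℝ) (dims : ℕ → ℕ)
    (H : ∀ k : ℕ, Fin (dims (k + 1)) → Fin (dims k) → ℝ) (hσ0 : σ 0 = 0) :
    ∀ k (j : Fin (dims k)), mlp σ dims H 0 k j = 0 := by
  intro k
  induction k with
  | zero => intro j; simp [mlp]
  | succ k ih =>
    intro j
    simp only [mlp]
    refine Finset.sum_eq_zero fun t _ => ?_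
    rcases Nat.eq_zero_or_pos k with hk | hk
    · subst hk; simp [ih]
    · rw [if_neg (Nat.pos_iff_ne_zero.mp hk), ih, hσ0, mul_zero]

open Finset in
private lemma mlp_lip (σ : ℝ → ℝ) (dims : ℕ → ℕ)
    (H : ∀ k : ℕ, Fin (dims (k + 1)) → Fin (dims k) → ℝ)
    (κ ω : ℝ) (hσ : ∀ a b : ℝ, |σ a - σ b| ≤ κ * |a - b|)
    (hκ : 0 ≤ κ) (hω : 0 ≤ ω) (d : ℕ)
    (hH : ∀ k < d, ∑ j, ∑ t, |H k j t| ≤ ω) (x y : ℝ) :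
    ∀ k, k + 1 ≤ d →
      ∑ j, |mlp σ dims H x (k + 1) j - mlp σ dims H y (k + 1) j|
        ≤ ω ^ (k + 1) * κ ^ k * |x - y| := by
  intro k
  induction k with
  | zero =>
    intro h1
    simp only [mlp, if_pos rfl]
    calc ∑ j, |∑ t, H 0 j t * x - ∑ t, H 0 j t * y|
        ≤ ∑ j, ∑ t, |H 0 j t| * |x - y| := by
          refine Finset.sum_le_sum fun j _ => ?_
          rw [← Finset.sum_sub_distrib]
          refine (Finset.abs_sum_le_sum_abs _ _).trans (Finset.sum_le_sum fun t _ => ?_)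
          rw [← mul_sub, abs_mul]
      _ = (∑ j, ∑ t, |H 0 j t|) * |x - y| := by
          rw [Finset.sum_mul]; exact Finset.sum_congr rfl fun j _ => (Finset.sum_mul _ _ _).symm
      _ ≤ ω ^ (0 + 1) * κ ^ 0 * |x - y| := by
          simp only [zero_add, pow_one, pow_zero, mul_one]
          exact mul_le_mul_of_nonneg_right (hH 0 (by omega)) (abs_nonneg _)
  | succ k ih =>
    intro h2
    have ih' := ih (by omega)
    set u := mlp σ dims H x (k + 1) with hu
    set v := mlp σ dims H y (k + 1) with hv
    set S : ℝ := ∑ t, |u t - v t| with hS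
    have hSnn : 0 ≤ S := Finset.sum_nonneg fun t _ => abs_nonneg _
    have hpt : ∀ t, |u t - v t| ≤ S := fun t => by
      rw [hS]; exact Finset.single_le_sum (f := fun t => |u t - v t|) (fun t _ => abs_nonneg _) (Finset.mem_univ t)
    calc ∑ j, |mlp σ dims H x (k + 2) j - mlp σ dims H y (k + 2) j|
        ≤ ∑ j, ∑ t, |H (k + 1) j t| * (κ * S) := by
          refine Finset.sum_le_sum fun j _ => ?_
          show |mlp σ dims H x (k+1+1) j - mlp σ dims H y (k+1+1) j| ≤ _
          simp only [mlp, if_neg (Nat.succ_ne_zero k)]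
          rw [← Finset.sum_sub_distrib]
          refine (Finset.abs_sum_le_sum_abs _ _).trans (Finset.sum_le_sum fun t _ => ?_)
          rw [← mul_sub, abs_mul]
          refine mul_le_mul_of_nonneg_left ?_ (abs_nonneg _)
          exact (hσ _ _).trans (mul_le_mul_of_nonneg_left (hpt t) hκ)
      _ = (∑ j, ∑ t, |H (k + 1) j t|) * (κ * S) := by
          rw [Finset.sum_mul]; exact Finset.sum_congr rfl fun j _ => (Finset.sum_mul _ _ _).symm
      _ ≤ ω * (κ * S) := by
          exact mul_le_mul_of_nonneg_right (hH (k + 1) (by omega)) (by positivity)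
      _ ≤ ω * (κ * (ω ^ (k + 1) * κ ^ k * |x - y|)) := by
          refine mul_le_mul_of_nonneg_left (mul_le_mul_of_nonneg_left ih' hκ) hω
      _ = ω ^ (k + 1 + 1) * κ ^ (k + 1) * |x - y| := by ring

private lemma mlp_bound (σ : ℝ → ℝ) (dims : ℕ → ℕ)
    (H : ∀ k : ℕ, Fin (dims (k + 1)) → Fin (dims k) → ℝ)
    (κ ω : ℝ) (hσ : ∀ a b : ℝ, |σ a - σ b| ≤ κ * |a - b|) (hσ0 : σ 0 = 0)
    (hκ : 0 ≤ κ) (hω : 0 ≤ ω) (d : ℕ)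
    (hH : ∀ k < d, ∑ j, ∑ t, |H k j t| ≤ ω) (x : ℝ) :
    ∀ k, k + 1 ≤ d →
      ∑ j, |mlp σ dims H x (k + 1) j| ≤ ω ^ (k + 1) * κ ^ k * |x| := by
  intro k hk
  have := mlp_lip σ dims H κ ω hσ hκ hω d hH x 0 k hk
  simpa [mlp_zero σ dims H hσ0] using this

/-- Injection step: sum over full index tuples of a product of two factors, each
omitting a different coordinate, is at most the product of the ℓ¹ norms. -/
private lemma key_two {N : ℕ} (r : Fin N → ℕ) (n₀ n₁ : Fin N) (h01 : n₀ ≠ n₁)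
    (f : (∀ m : {m : Fin N // m ≠ n₀}, Fin (r m.1)) → ℝ)
    (g : (∀ m : {m : Fin N // m ≠ n₁}, Fin (r m.1)) → ℝ)
    (hf : ∀ q, 0 ≤ f q) (hg : ∀ q, 0 ≤ g q) :
    ∑ p : ∀ m : Fin N, Fin (r m),
        f (fun m => p m.1) * g (fun m => p m.1) ≤ (∑ q, f q) * (∑ q, g q) := by
  classical
  set φ : (∀ m : Fin N, Fin (r m)) →
      ((∀ m : {m : Fin N // m ≠ n₀}, Fin (r m.1)) × (∀ m : {m : Fin N // m ≠ n₁}, Fin (r m.1))) :=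
    fun p => (fun m => p m.1, fun m => p m.1) with hφ
  have hinj : Function.Injective φ := by
    intro p p' h
    funext m
    by_cases hm : m = n₀
    · subst hm
      have := congrFun (congrArg Prod.snd h) ⟨m, h01⟩
      exact this
    · exact congrFun (congrArg Prod.fst h) ⟨m, hm⟩
  calc ∑ p : ∀ m : Fin N, Fin (r m), f (fun m => p m.1) * g (fun m => p m.1)
      = ∑ c ∈ Finset.univ.image φ, f c.1 * g c.2 := by
        rw [Finset.sum_image (fun a _ b _ h => hinj h)]
    _ ≤ ∑ c : (∀ m : {m : Fin N // m ≠ n₀}, Fin (r m.1)) ×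
          (∀ m : {m : Fin N // m ≠ n₁}, Fin (r m.1)), f c.1 * g c.2 := by
        refine Finset.sum_le_sum_of_subset_of_nonneg (Finset.subset_univ _)
          (fun c _ _ => mul_nonneg (hf _) (hg _))
    _ = (∑ q, f q) * (∑ q, g q) := by
        rw [Finset.sum_mul_sum, Fintype.sum_prod_type]

/-- Key combinatorial inequality: a sum over full tuples of a product of factors,
the `n`-th omitting coordinate `n`, is at most the product of the ℓ¹ norms. -/
private lemma key_sum {N : ℕ} (hN : 2 ≤ N) (r : Fin N → ℕ)
    (g : ∀ n : Fin N, (∀ m : {m : Fin N // m ≠ n}, Fin (r m.1)) → ℝ)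
    (hg : ∀ n q, 0 ≤ g n q) :
    ∑ p : ∀ m : Fin N, Fin (r m), ∏ n, g n (fun m => p m.1) ≤ ∏ n, ∑ q, g n q := by
  classical
  have hN0 : 0 < N := by omega
  have hN1 : 1 < N := by omega
  set n₀ : Fin N := ⟨0, hN0⟩
  set n₁ : Fin N := ⟨1, hN1⟩
  have h01 : n₀ ≠ n₁ := by simp [n₀, n₁, Fin.ext_iff]
  set s : Finset (Fin N) := (Finset.univ.erase n₀).erase n₁ with hs
  have hmem1 : n₁ ∈ Finset.univ.erase n₀ := by
    simp [Finset.mem_erase, h01.symm]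
  have hGnn : ∀ n, (0:ℝ) ≤ ∑ q, g n q := fun n => Finset.sum_nonneg fun q _ => hg n q
  have hsplit : ∀ F : Fin N → ℝ, ∏ n, F n = F n₀ * (F n₁ * ∏ n ∈ s, F n) := by
    intro F
    rw [← Finset.mul_prod_erase _ F (Finset.mem_univ n₀), ← Finset.mul_prod_erase _ F hmem1]
  calc ∑ p : ∀ m : Fin N, Fin (r m), ∏ n, g n (fun m => p m.1)
      ≤ ∑ p : ∀ m : Fin N, Fin (r m),
          (g n₀ (fun m => p m.1) * g n₁ (fun m => p m.1)) * ∏ n ∈ s, ∑ q, g n q := by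
        refine Finset.sum_le_sum fun p _ => ?_
        rw [hsplit (fun n => g n (fun m => p m.1)), ← mul_assoc]
        refine mul_le_mul_of_nonneg_left ?_ (mul_nonneg (hg _ _) (hg _ _))
        refine Finset.prod_le_prod (fun n _ => hg _ _) fun n _ => ?_
        exact Finset.single_le_sum (fun q _ => hg n q) (Finset.mem_univ _)
    _ = (∑ p : ∀ m : Fin N, Fin (r m),
          g n₀ (fun m => p m.1) * g n₁ (fun m => p m.1)) * ∏ n ∈ s, ∑ q, g n q := by
        rw [Finset.sum_mul]
    _ ≤ ((∑ q, g n₀ q) * (∑ q, g n₁ q)) * ∏ n ∈ s, ∑ q, g n q := by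
        refine mul_le_mul_of_nonneg_right
          (key_two r n₀ n₁ h01 (g n₀) (g n₁) (hg n₀) (hg n₁))
          (Finset.prod_nonneg fun n _ => hGnn n)
    _ = ∏ n, ∑ q, g n q := by rw [hsplit (fun n => ∑ q, g n q)]; ring

/-- Per-coordinate Lipschitz bound for `imtdFun`. -/
private lemma coord_bound {N : ℕ} (hN : 2 ≤ N) (r : Fin N → ℕ) (σ : ℝ → ℝ)
    (κ ω ζ : ℝ) (hκ : 0 ≤ κ) (hω : 0 ≤ ω) (hζ : 0 ≤ ζ) (d' : ℕ)
    (dims : Fin N → ℕ → ℕ)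
    (H : ∀ n : Fin N, ∀ k : ℕ, Fin (dims n (k + 1)) → Fin (dims n k) → ℝ)
    (e : ∀ n : Fin N, (∀ m : {m : Fin N // m ≠ n}, Fin (r m.1)) ≃ Fin (dims n (d' + 1)))
    (hσ : ∀ a b : ℝ, |σ a - σ b| ≤ κ * |a - b|) (hσ0 : σ 0 = 0)
    (hH : ∀ n, ∀ k < d' + 1, ∑ j, ∑ t, |H n k j t| ≤ ω)
    (u v : Fin N → ℝ) (n₀ : Fin N) (huv : ∀ n, n ≠ n₀ → u n = v n)
    (hu : ∀ n, |u n| ≤ ζ) :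
    |imtdFun r σ (d' + 1) dims H e u - imtdFun r σ (d' + 1) dims H e v| ≤
      (ω ^ (d' + 1) * κ ^ d') ^ N * ζ ^ (N - 1) * |u n₀ - v n₀| := by
  classical
  set W : ℝ := ω ^ (d' + 1) * κ ^ d' with hW
  have hWnn : 0 ≤ W := by positivity
  set A : ∀ n : Fin N, ℝ → Fin (dims n (d' + 1)) → ℝ :=
    fun n t => mlp σ (dims n) (H n) t (d' + 1) with hA
  set g : ∀ n : Fin N, (∀ m : {m : Fin N // m ≠ n}, Fin (r m.1)) → ℝ :=
    fun n q => if n = n₀ then |A n (u n) (e n q) - A n (v n) (e n q)|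
      else |A n (u n) (e n q)| with hg
  clear_value W A g
  have hgnn : ∀ n q, 0 ≤ g n q := by
    intro n q; rw [hg]; dsimp only; split <;> exact abs_nonneg _
  -- pointwise factorization of the difference of products
  have hfactor : ∀ p : ∀ m : Fin N, Fin (r m),
      |(∏ n, A n (u n) (e n fun m => p m.1)) - ∏ n, A n (v n) (e n fun m => p m.1)|
        = ∏ n, g n (fun m => p m.1) := by
    intro p
    have h0 : n₀ ∈ Finset.univ := Finset.mem_univ n₀
    rw [← Finset.mul_prod_erase _ (fun n => A n (u n) (e n fun m => p m.1)) h0,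
        ← Finset.mul_prod_erase _ (fun n => A n (v n) (e n fun m => p m.1)) h0,
        ← Finset.mul_prod_erase _ (fun n => g n (fun m => p m.1)) h0]
    have hrest : ∏ n ∈ Finset.univ.erase n₀, A n (v n) (e n fun m => p m.1)
        = ∏ n ∈ Finset.univ.erase n₀, A n (u n) (e n fun m => p m.1) :=
      Finset.prod_congr rfl fun n hn => by
        rw [huv n (Finset.ne_of_mem_erase hn)]
    rw [hrest, ← sub_mul, abs_mul, Finset.abs_prod]
    congr 1
    · rw [hg]; dsimp only; rw [if_pos rfl]
    · refine Finset.prod_congr rfl fun n hn => ?_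
      rw [hg]; dsimp only; rw [if_neg (Finset.ne_of_mem_erase hn)]
  -- ℓ¹ bounds on each factor
  have hGle : ∀ n : Fin N, (∑ q, g n q) ≤ if n = n₀ then W * |u n₀ - v n₀| else W * ζ := by
    intro n
    by_cases hn : n = n₀
    · subst hn
      rw [if_pos rfl]
      have : (∑ q, g n q) = ∑ j, |A n (u n) j - A n (v n) j| := by
        rw [hg]; dsimp only; simp only [if_pos rfl]
        exact Equiv.sum_comp (e n) (fun j => |A n (u n) j - A n (v n) j|)
      rw [this, hA, hW]
      exact mlp_lip σ (dims n) (H n) κ ω (hσ) hκ hω (d' + 1) (hH n) (u n) (v n) d' le_rfl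
    · rw [if_neg hn]
      have : (∑ q, g n q) = ∑ j, |A n (u n) j| := by
        rw [hg]; dsimp only; simp only [if_neg hn]
        exact Equiv.sum_comp (e n) (fun j => |A n (u n) j|)
      rw [this, hA, hW]
      calc ∑ j, |mlp σ (dims n) (H n) (u n) (d' + 1) j|
          ≤ ω ^ (d' + 1) * κ ^ d' * |u n| :=
            mlp_bound σ (dims n) (H n) κ ω hσ hσ0 hκ hω (d' + 1) (hH n) (u n) d' le_rfl
        _ ≤ ω ^ (d' + 1) * κ ^ d' * ζ := by
            exact mul_le_mul_of_nonneg_left (hu n) (by positivity)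
  -- assemble
  calc |imtdFun r σ (d' + 1) dims H e u - imtdFun r σ (d' + 1) dims H e v|
      = |∑ p : ∀ m : Fin N, Fin (r m),
          ((∏ n, A n (u n) (e n fun m => p m.1)) - ∏ n, A n (v n) (e n fun m => p m.1))| := by
        rw [imtdFun, imtdFun, ← Finset.sum_sub_distrib]; simp only [hA]
    _ ≤ ∑ p : ∀ m : Fin N, Fin (r m), ∏ n, g n (fun m => p m.1) := by
        refine (Finset.abs_sum_le_sum_abs _ _).trans ?_
        exact le_of_eq (Finset.sum_congr rfl fun p _ => hfactor p)
    _ ≤ ∏ n, ∑ q, g n q := key_sum hN r g hgnn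
    _ ≤ ∏ n, (if n = n₀ then W * |u n₀ - v n₀| else W * ζ) := by
        refine Finset.prod_le_prod (fun n _ => Finset.sum_nonneg fun q _ => hgnn n q)
          (fun n _ => hGle n)
    _ = (W * |u n₀ - v n₀|) * (W * ζ) ^ (N - 1) := by
        rw [← Finset.mul_prod_erase _ _ (Finset.mem_univ n₀), if_pos rfl]
        congr 1
        rw [Finset.prod_congr rfl (fun n hn => if_neg (Finset.ne_of_mem_erase hn)),
          Finset.prod_const, Finset.card_erase_of_mem (Finset.mem_univ n₀),
          Finset.card_univ, Fintype.card_fin]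
    _ = W ^ N * ζ ^ (N - 1) * |u n₀ - v n₀| := by
        have h1 : N - 1 + 1 = N := by omega
        have hw : W * W ^ (N - 1) = W ^ N := by rw [← pow_succ', h1]
        calc (W * |u n₀ - v n₀|) * (W * ζ) ^ (N - 1)
            = (W * W ^ (N - 1)) * ζ ^ (N - 1) * |u n₀ - v n₀| := by rw [mul_pow]; ring
          _ = W ^ N * ζ ^ (N - 1) * |u n₀ - v n₀| := by rw [hw]

theorem stmt14 {N : ℕ} (hN : 2 ≤ N) (r : Fin N → ℕ) (σ : ℝ → ℝ)
    (κ ω ζ : ℝ) (hω : 0 < ω) (d : ℕ) (hd : 1 ≤ d)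
    (dims : Fin N → ℕ → ℕ) (hdims : ∀ n, dims n 0 = 1)
    (H : ∀ n : Fin N, ∀ k : ℕ, Fin (dims n (k + 1)) → Fin (dims n k) → ℝ)
    (e : ∀ n : Fin N, (∀ m : {m : Fin N // m ≠ n}, Fin (r m.1)) ≃ Fin (dims n d))
    (hσ : ∀ a b : ℝ, |σ a - σ b| ≤ κ * |a - b|) (hσ0 : σ 0 = 0)
    (hH : ∀ n, ∀ k < d, ∑ j, ∑ t, |H n k j t| ≤ ω)
    (x y : Fin N → ℝ) (hx : ∀ n, |x n| ≤ ζ) (hy : ∀ n, |y n| ≤ ζ) :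
    |imtdFun r σ d dims H e x - imtdFun r σ d dims H e y| ≤
      Real.sqrt N * ω ^ (N * d) * κ ^ (N * d - N) * ζ ^ (N - 1) *
        Real.sqrt (∑ n, (x n - y n) ^ 2) := by
  classical
  have hκ : 0 ≤ κ := by
    have h := hσ 1 0
    simp only [sub_zero, abs_one, mul_one, hσ0] at h
    exact le_trans (abs_nonneg _) h
  have hζ : 0 ≤ ζ := le_trans (abs_nonneg _) (hx ⟨0, by omega⟩)
  obtain ⟨d', rfl⟩ : ∃ d', d = d' + 1 := ⟨d - 1, by omega⟩
  set C : ℝ := (ω ^ (d' + 1) * κ ^ d') ^ N * ζ ^ (N - 1) with hC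
  have hCnn : 0 ≤ C := by positivity
  -- hybrid points
  set z : ℕ → Fin N → ℝ := fun j n => if (n : ℕ) < j then y n else x n with hz
  set F : ℕ → ℝ := fun j => imtdFun r σ (d' + 1) dims H e (z j) with hF
  have hz0 : z 0 = x := funext fun n => if_neg (by omega)
  have hzN : z N = y := funext fun n => if_pos n.isLt
  set D : ℕ → ℝ := fun j => if h : j < N then |x ⟨j, h⟩ - y ⟨j, h⟩| else 0 with hD
  have hstep : ∀ j ∈ Finset.range N, |F (j + 1) - F j| ≤ C * D j := by
    intro j hj
    rw [Finset.mem_range] at hj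
    set n₀ : Fin N := ⟨j, hj⟩ with hn₀
    have huv : ∀ n, n ≠ n₀ → z (j + 1) n = z j n := by
      intro n hn
      have hne : (n : ℕ) ≠ j := fun h => hn (Fin.ext h)
      rw [hz]; dsimp only
      by_cases h : (n : ℕ) < j
      · rw [if_pos h, if_pos (by omega)]
      · rw [if_neg h, if_neg (by omega)]
    have hu : ∀ n, |z (j + 1) n| ≤ ζ := by
      intro n; rw [hz]; dsimp only; split
      · exact hy n
      · exact hx n
    have h1 := coord_bound hN r σ κ ω ζ hκ hω.le hζ d' dims H e hσ hσ0 hH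
      (z (j + 1)) (z j) n₀ huv hu
    have hval : (n₀ : ℕ) = j := rfl
    have h2 : z (j + 1) n₀ = y n₀ := by rw [hz]; exact if_pos (by omega)
    have h3 : z j n₀ = x n₀ := by rw [hz]; exact if_neg (by omega)
    rw [h2, h3] at h1
    calc |F (j + 1) - F j| ≤ C * |y n₀ - x n₀| := h1
      _ = C * D j := by
        rw [hD]; dsimp only; rw [dif_pos hj, abs_sub_comm]
  have htel : |imtdFun r σ (d' + 1) dims H e x - imtdFun r σ (d' + 1) dims H e y|
      ≤ C * ∑ n, |x n - y n| := by
    have h0 : imtdFun r σ (d' + 1) dims H e x - imtdFun r σ (d' + 1) dims H e y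
        = -(F N - F 0) := by rw [hF]; dsimp only; rw [hz0, hzN]; ring
    rw [h0, abs_neg, ← Finset.sum_range_sub F N]
    refine (Finset.abs_sum_le_sum_abs _ _).trans ?_
    refine (Finset.sum_le_sum hstep).trans ?_
    rw [← Finset.mul_sum]
    refine mul_le_mul_of_nonneg_left (le_of_eq ?_) hCnn
    rw [← Fin.sum_univ_eq_sum_range D N]
    refine Finset.sum_congr rfl fun n _ => ?_
    rw [hD]; dsimp only; rw [dif_pos n.isLt]
  -- Cauchy–Schwarz
  have hcs : ∑ n, |x n - y n| ≤ Real.sqrt N * Real.sqrt (∑ n, (x n - y n) ^ 2) := by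
    have h1 : (∑ n, |x n - y n|) ^ 2 ≤ (N : ℝ) * ∑ n, (x n - y n) ^ 2 := by
      have := sq_sum_le_card_mul_sum_sq (s := (Finset.univ : Finset (Fin N)))
        (f := fun n => |x n - y n|)
      simpa [sq_abs, Finset.card_univ] using this
    have h2 : ∑ n, |x n - y n| = Real.sqrt ((∑ n, |x n - y n|) ^ 2) :=
      (Real.sqrt_sq (Finset.sum_nonneg fun n _ => abs_nonneg _)).symm
    rw [h2, ← Real.sqrt_mul (by positivity)]
    exact Real.sqrt_le_sqrt h1
  have hmain := htel.trans (mul_le_mul_of_nonneg_left hcs hCnn)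
  refine hmain.trans (le_of_eq ?_)
  rw [hC, mul_pow, ← pow_mul, ← pow_mul]
  have e1 : (d' + 1) * N = N * (d' + 1) := mul_comm _ _
  have e2 : d' * N = N * (d' + 1) - N := by rw [Nat.mul_succ, Nat.add_sub_cancel, Nat.mul_comm]
  rw [e1, e2]; ring
end

section
/- For a third-order nonzero tensor X ∈ ℝ^{n₁×n₂×n₃}, the triple rank (the generalized triple rank with N = 3) satisfies TriRank(X) ≤ mid{n₁, n₂, n₃}, the median of the three dimensions; in particular a decomposition X_{ijt} = Σ_{p,q,s=1}^r a_{iqs} b_{pjs} c_{pqt} always exists with r equal to the median dimension. -/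
open scoped BigOperators

/-- `X` admits a triple decomposition `X = [ABC]` with parameter `r`. -/
def HasTri {n₁ n₂ n₃ : ℕ} (X : Fin n₁ → Fin n₂ → Fin n₃ → ℝ) (r : ℕ) : Prop :=
  ∃ (A : Fin n₁ → Fin r → Fin r → ℝ) (B : Fin r → Fin n₂ → Fin r → ℝ)
    (C : Fin r → Fin r → Fin n₃ → ℝ),
    ∀ i j t, X i j t = ∑ p : Fin r, ∑ q : Fin r, ∑ s : Fin r, A i q s * B p j s * C p q t

/-- The triple rank of a third-order tensor. -/
noncomputable def TriRank {n₁ n₂ n₃ : ℕ} (X : Fin n₁ → Fin n₂ → Fin n₃ → ℝ) : ℕ :=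
  sInf {r : ℕ | HasTri X r}

/-- The median of three natural numbers. -/
def mid3 (a b c : ℕ) : ℕ := max (min a b) (min (max a b) c)

lemma hasTri12 {n₁ n₂ n₃ r : ℕ} (h1 : n₁ ≤ r) (h2 : n₂ ≤ r)
    (X : Fin n₁ → Fin n₂ → Fin n₃ → ℝ) : HasTri X r := by
  refine ⟨fun i q s => if q = Fin.castLE h1 i ∧ s = Fin.castLE h1 i then 1 else 0,
          fun p j _ => if p = Fin.castLE h2 j then 1 else 0,
          fun p q t => if hp : (p : ℕ) < n₂ then
            (if hq : (q : ℕ) < n₁ then X ⟨q, hq⟩ ⟨p, hp⟩ t else 0) else 0,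
          fun i j t => ?_⟩
  simp only [ite_and, ite_mul, mul_ite, one_mul, zero_mul, mul_one, mul_zero,
    Finset.sum_ite_eq', Finset.mem_univ, if_true]
  simp [i.isLt, j.isLt]

lemma hasTri13 {n₁ n₂ n₃ r : ℕ} (h1 : n₁ ≤ r) (h3 : n₃ ≤ r)
    (X : Fin n₁ → Fin n₂ → Fin n₃ → ℝ) : HasTri X r := by
  refine ⟨fun i q s => if q = Fin.castLE h1 i ∧ s = Fin.castLE h1 i then 1 else 0,
          fun p j s => if hp : (p : ℕ) < n₃ then
            (if hs : (s : ℕ) < n₁ then X ⟨s, hs⟩ j ⟨p, hp⟩ else 0) else 0,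
          fun p _ t => if p = Fin.castLE h3 t then 1 else 0,
          fun i j t => ?_⟩
  simp only [ite_and, ite_mul, mul_ite, one_mul, zero_mul, mul_one, mul_zero,
    Finset.sum_ite_eq', Finset.mem_univ, if_true]
  simp [i.isLt, t.isLt]

lemma hasTri23 {n₁ n₂ n₃ r : ℕ} (h2 : n₂ ≤ r) (h3 : n₃ ≤ r)
    (X : Fin n₁ → Fin n₂ → Fin n₃ → ℝ) : HasTri X r := by
  refine ⟨fun i q s => if hq : (q : ℕ) < n₃ then
            (if hs : (s : ℕ) < n₂ then X i ⟨s, hs⟩ ⟨q, hq⟩ else 0) else 0,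
          fun p j s => if p = Fin.castLE h2 j ∧ s = Fin.castLE h2 j then 1 else 0,
          fun _ q t => if q = Fin.castLE h3 t then 1 else 0,
          fun i j t => ?_⟩
  simp only [ite_and, ite_mul, mul_ite, one_mul, zero_mul, mul_one, mul_zero,
    Finset.sum_ite_eq', Finset.mem_univ, if_true]
  simp [j.isLt, t.isLt]

theorem stmt19 {n₁ n₂ n₃ : ℕ} (X : Fin n₁ → Fin n₂ → Fin n₃ → ℝ) (hX : X ≠ 0) :
    HasTri X (mid3 n₁ n₂ n₃) ∧ TriRank X ≤ mid3 n₁ n₂ n₃ := by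
  have h : HasTri X (mid3 n₁ n₂ n₃) := by
    have hcase : (n₁ ≤ mid3 n₁ n₂ n₃ ∧ n₂ ≤ mid3 n₁ n₂ n₃) ∨
        (n₁ ≤ mid3 n₁ n₂ n₃ ∧ n₃ ≤ mid3 n₁ n₂ n₃) ∨
        (n₂ ≤ mid3 n₁ n₂ n₃ ∧ n₃ ≤ mid3 n₁ n₂ n₃) := by
      unfold mid3; omega
    rcases hcase with ⟨ha, hb⟩ | ⟨ha, hb⟩ | ⟨ha, hb⟩
    · exact hasTri12 ha hb X
    · exact hasTri13 ha hb X
    · exact hasTri23 ha hb X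
  exact ⟨h, Nat.sInf_le h⟩
end
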